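/- arXiv:1311.2097 — 2 statements merged into one kernel-verified Lean document; each statement's English description precedes it below -/
import Mathlib

section
/- Suppose u : ℝ → ℝ is continuous, strictly increasing, concave, and u(y₀) = x₀ for some y₀ ∈ ℝ. Then the utility-based shortfall ρ is concave in its first argument: for all X, Y : I → ℝ and all α ∈ [0,1], ρ(αX + (1−α)Y) ≥ α ρ(X) + (1−α) ρ(Y). -/
/-!
A convex combination of acceptable capital amounts for `X` and `Y` is acceptable for the
corresponding combination of `X` and `Y`: this is Jensen's inequality for the concave `u`,
applied to each outcome `i` and then averaged over `μ`. Taking suprema gives the concavity of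
`ρ`, once the acceptance sets are known to be nonempty and bounded above; both follow from
comparing with `u y₀ = x₀` at `m = min Z - y₀` and beyond `m = max Z - y₀`.
-/

open Finset

section

variable {I : Type*} [Fintype I]

/-- `ρ(Z)` is the supremum of this set. -/
def acceptanceSet (μ : I → ℝ) (u : ℝ → ℝ) (x₀ : ℝ) (Z : I → ℝ) : Set ℝ :=
  {m | x₀ ≤ ∑ i, μ i * u (Z i - m)}

section ProbabilityWeights

variable {μ : I → ℝ} (hμ0 : ∀ i, 0 ≤ μ i) (hμ1 : ∑ i, μ i = 1)
include hμ0 hμ1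

lemma le_sum_weighted_of_forall_le {c : ℝ} {f : I → ℝ} (h : ∀ i, c ≤ f i) :
    c ≤ ∑ i, μ i * f i :=
  calc c = ∑ i, μ i * c := by rw [← sum_mul, hμ1, one_mul]
    _ ≤ ∑ i, μ i * f i := sum_le_sum fun i _ => mul_le_mul_of_nonneg_left (h i) (hμ0 i)

lemma sum_weighted_lt_of_forall_lt {c : ℝ} {f : I → ℝ} (h : ∀ i, f i < c) :
    ∑ i, μ i * f i < c := by
  obtain ⟨j, -, hj⟩ : ∃ j ∈ univ, (0 : ℝ) < μ j :=
    exists_lt_of_sum_lt (by simp [hμ1])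
  calc ∑ i, μ i * f i < ∑ i, μ i * c :=
        sum_lt_sum (fun i _ => mul_le_mul_of_nonneg_left (h i).le (hμ0 i))
          ⟨j, mem_univ j, mul_lt_mul_of_pos_left (h j) hj⟩
    _ = c := by rw [← sum_mul, hμ1, one_mul]

end ProbabilityWeights

section AcceptanceSet

variable {μ : I → ℝ} (hμ0 : ∀ i, 0 ≤ μ i) (hμ1 : ∑ i, μ i = 1)
  {u : ℝ → ℝ} {y₀ x₀ : ℝ} (hy₀ : u y₀ = x₀)
include hμ0 hμ1 hy₀

lemma acceptanceSet_nonempty [Nonempty I] (hu : Monotone u) (Z : I → ℝ) :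
    (acceptanceSet μ u x₀ Z).Nonempty :=
  ⟨univ.inf' univ_nonempty Z - y₀, le_sum_weighted_of_forall_le hμ0 hμ1 fun i =>
    hy₀ ▸ hu (by linarith [inf'_le Z (mem_univ i)])⟩

lemma bddAbove_acceptanceSet [Nonempty I] (hu : StrictMono u) (Z : I → ℝ) :
    BddAbove (acceptanceSet μ u x₀ Z) := by
  refine ⟨univ.sup' univ_nonempty Z - y₀, fun m hm => ?_⟩
  by_contra! hlt
  refine (sum_weighted_lt_of_forall_lt hμ0 hμ1 fun i => ?_).not_ge hm
  exact hy₀ ▸ hu (by linarith [le_sup' Z (mem_univ i)])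

end AcceptanceSet

lemma smul_add_smul_mem_acceptanceSet {μ : I → ℝ} (hμ0 : ∀ i, 0 ≤ μ i) {u : ℝ → ℝ}
    (hu : ConcaveOn ℝ Set.univ u) {x₀ : ℝ} {X Y : I → ℝ} {m m' a b : ℝ}
    (ha : 0 ≤ a) (hb : 0 ≤ b) (hab : a + b = 1)
    (hm : m ∈ acceptanceSet μ u x₀ X) (hm' : m' ∈ acceptanceSet μ u x₀ Y) :
    a * m + b * m' ∈ acceptanceSet μ u x₀ (a • X + b • Y) := by
  have jensen : ∀ i, a * u (X i - m) + b * u (Y i - m') ≤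
      u ((a • X + b • Y) i - (a * m + b * m')) := fun i => by
    have h := hu.2 (Set.mem_univ (X i - m)) (Set.mem_univ (Y i - m')) ha hb hab
    simp only [smul_eq_mul] at h
    refine h.trans_eq (congrArg u ?_)
    simp only [Pi.add_apply, Pi.smul_apply, smul_eq_mul]
    ring
  calc x₀ = a * x₀ + b * x₀ := by rw [← add_mul, hab, one_mul]
    _ ≤ a * ∑ i, μ i * u (X i - m) + b * ∑ i, μ i * u (Y i - m') := by
      gcongr
      exacts [hm, hm']
    _ = ∑ i, μ i * (a * u (X i - m) + b * u (Y i - m')) := by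
      simp only [mul_sum, ← sum_add_distrib]
      exact sum_congr rfl fun i _ => by ring
    _ ≤ _ := sum_le_sum fun i _ => mul_le_mul_of_nonneg_left (jensen i) (hμ0 i)

lemma mul_csSup_add_mul_csSup_le {A B C : Set ℝ} {a b : ℝ} (ha : 0 ≤ a) (hb : 0 ≤ b)
    (hA : A.Nonempty) (hA' : BddAbove A) (hB : B.Nonempty) (hB' : BddAbove B)
    (hC : BddAbove C) (h : ∀ x ∈ A, ∀ y ∈ B, a * x + b * y ∈ C) :
    a * sSup A + b * sSup B ≤ sSup C := by
  rw [← smul_eq_mul, ← smul_eq_mul, ← Real.sSup_smul_of_nonneg ha, ← Real.sSup_smul_of_nonneg hb,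
    ← csSup_add hA.smul_set (hA'.smul_of_nonneg ha) hB.smul_set (hB'.smul_of_nonneg hb)]
  refine csSup_le_csSup hC (hA.smul_set.add hB.smul_set) ?_
  rintro _ ⟨_, ⟨x, hx, rfl⟩, _, ⟨y, hy, rfl⟩, rfl⟩
  exact h x hx y hy

end

theorem stmt_6_general {I : Type*} [Fintype I] [Nonempty I]
    (μ : I → ℝ) (hμ0 : ∀ i, 0 ≤ μ i) (hμ1 : ∑ i, μ i = 1)
    (u : ℝ → ℝ) (hu_mono : StrictMono u)
    (hu_conc : ConcaveOn ℝ Set.univ u)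
    (y₀ x₀ : ℝ) (hy₀ : u y₀ = x₀)
    (X Y : I → ℝ) (α : ℝ) (hα0 : 0 ≤ α) (hα1 : α ≤ 1) :
    α * sSup {m : ℝ | x₀ ≤ ∑ i, μ i * u (X i - m)} +
      (1 - α) * sSup {m : ℝ | x₀ ≤ ∑ i, μ i * u (Y i - m)} ≤
    sSup {m : ℝ | x₀ ≤ ∑ i, μ i * u (α * X i + (1 - α) * Y i - m)} := by
  have hβ0 : 0 ≤ 1 - α := sub_nonneg.2 hα1
  have hne := acceptanceSet_nonempty hμ0 hμ1 hy₀ hu_mono.monotone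
  have hbdd := bddAbove_acceptanceSet hμ0 hμ1 hy₀ hu_mono
  exact mul_csSup_add_mul_csSup_le (C := acceptanceSet μ u x₀ (α • X + (1 - α) • Y))
    hα0 hβ0 (hne X) (hbdd X) (hne Y) (hbdd Y) (hbdd _)
    fun m hm m' hm' => smul_add_smul_mem_acceptanceSet hμ0 hu_conc hα0 hβ0 (by ring) hm hm'

/-- If `u : ℝ → ℝ` is continuous, strictly increasing, concave, and
`u y₀ = x₀`, then the utility-based shortfall
`ρ(X) = sup { m | ∑ i, μ i * u (X i − m) ≥ x₀ }` is concave in `X`: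
`ρ(αX + (1−α)Y) ≥ α ρ(X) + (1−α) ρ(Y)` for all `α ∈ [0,1]`. -/
theorem stmt_6 {I : Type*} [Fintype I] [Nonempty I]
    (μ : I → ℝ) (hμ0 : ∀ i, 0 ≤ μ i) (hμ1 : ∑ i, μ i = 1)
    (u : ℝ → ℝ) (hu_cont : Continuous u) (hu_mono : StrictMono u)
    (hu_conc : ConcaveOn ℝ Set.univ u)
    (y₀ x₀ : ℝ) (hy₀ : u y₀ = x₀)
    (X Y : I → ℝ) (α : ℝ) (hα0 : 0 ≤ α) (hα1 : α ≤ 1) :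
    α * sSup {m : ℝ | x₀ ≤ ∑ i, μ i * u (X i - m)} +
      (1 - α) * sSup {m : ℝ | x₀ ≤ ∑ i, μ i * u (Y i - m)} ≤
    sSup {m : ℝ | x₀ ≤ ∑ i, μ i * u (α * X i + (1 - α) * Y i - m)} :=
  stmt_6_general μ hμ0 hμ1 u hu_mono hu_conc y₀ x₀ hy₀ X Y α hα0 hα1
end

section
/- Suppose u : ℝ → ℝ satisfies there exist constants 0 < ε ≤ L with ε ≤ (u(x) − u(y))/(x − y) ≤ L for all x ≠ y, let x₀ ∈ ℝ, and suppose γ ∈ [0,1). Then the risk-sensitive optimality equation Σ_{s'∈S, ε∈E} P(s'|s,a) P_r(ε|s,a) · u( r(s,a,ε) + γ max_{a'∈A(s')} Q(s',a') − Q(s,a) ) = x₀ for all (s,a) ∈ K has a unique solution Q* : K → ℝ. -/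
/-!
For a probability vector `w` and payoffs `c`, the map `t ↦ ∑ i, w i * u (c i - t)` is continuous
and decreases with slope at most `-ε`, so it takes the value `x₀` at exactly one point, the utility
shortfall of `c`. Shifting every payoff by at most `δ` shifts the shortfall by at most `δ`, hence
the risk-sensitive Bellman operator `T : Q ↦ shortfall of (r + γ max Q)` is a `γ`-contraction
in the sup metric. Its fixed point solves the equation, and every solution `Q` yields the fixed
point `T Q`, because `T` only sees `Q` on admissible pairs; uniqueness of the fixed point gives
uniqueness of the solution there.
-/

open Finset Filter Function

lemma sub_bounds_of_slope_bounds {u : ℝ → ℝ} {ε L : ℝ}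
    (hslope : ∀ x y : ℝ, x ≠ y → ε ≤ (u x - u y) / (x - y) ∧ (u x - u y) / (x - y) ≤ L)
    {x y : ℝ} (h : y ≤ x) : ε * (x - y) ≤ u x - u y ∧ u x - u y ≤ L * (x - y) := by
  rcases h.eq_or_lt with rfl | hlt
  · simp
  · have hpos : 0 < x - y := sub_pos.2 hlt
    obtain ⟨hlo, hhi⟩ := hslope x y hlt.ne'
    exact ⟨(le_div_iff₀ hpos).1 hlo, (div_le_iff₀ hpos).1 hhi⟩

lemma lipschitzWith_of_slope_bounds {u : ℝ → ℝ} {ε L : ℝ} (hε : 0 ≤ ε)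
    (hslope : ∀ x y : ℝ, x ≠ y → ε ≤ (u x - u y) / (x - y) ∧ (u x - u y) / (x - y) ≤ L) :
    LipschitzWith L.toNNReal u := by
  have key : ∀ x y, y ≤ x → |u x - u y| ≤ L * |x - y| := fun x y h => by
    obtain ⟨hlo, hhi⟩ := sub_bounds_of_slope_bounds hslope h
    rw [abs_of_nonneg (by nlinarith), abs_of_nonneg (sub_nonneg.2 h)]
    exact hhi
  refine LipschitzWith.of_dist_le' fun x y => ?_
  simp only [Real.dist_eq]
  rcases le_total y x with h | h
  · exact key x y h
  · rw [abs_sub_comm, abs_sub_comm x]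
    exact key y x h

lemma Finset.abs_sup'_sub_sup'_le {α G : Type*} [AddCommGroup G] [LinearOrder G]
    [IsOrderedAddMonoid G] {s : Finset α} (hs : s.Nonempty) {f g : α → G} {d : G}
    (h : ∀ a ∈ s, |f a - g a| ≤ d) : |s.sup' hs f - s.sup' hs g| ≤ d := by
  have le_add : ∀ f g : α → G, (∀ a ∈ s, f a ≤ g a + d) → s.sup' hs f ≤ s.sup' hs g + d :=
    fun f g hfg => by
      rw [Finset.sup'_add]
      exact Finset.sup'_mono_fun hfg
  rw [abs_sub_le_iff, sub_le_iff_le_add', sub_le_iff_le_add']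
  constructor
  · exact le_add f g fun a ha => sub_le_iff_le_add'.1 (abs_sub_le_iff.1 (h a ha)).1
  · exact le_add g f fun a ha => sub_le_iff_le_add'.1 (abs_sub_le_iff.1 (h a ha)).2

section UtilityShortfall

variable {ι : Type*} [Fintype ι] {u : ℝ → ℝ} {ε x₀ : ℝ} {w : ι → ℝ}

def expectedUtility (u : ℝ → ℝ) (w c : ι → ℝ) (t : ℝ) : ℝ :=
  ∑ i, w i * u (c i - t)

lemma expectedUtility_add_mul_le (hlow : ∀ x y, y ≤ x → ε * (x - y) ≤ u x - u y)
    (hw : w ∈ stdSimplex ℝ ι) (c : ι → ℝ) {t t' : ℝ} (h : t ≤ t') :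
    expectedUtility u w c t' + ε * (t' - t) ≤ expectedUtility u w c t := by
  have termwise : ∀ i, w i * u (c i - t') + w i * (ε * (t' - t)) ≤ w i * u (c i - t) := by
    intro i
    have := hlow (c i - t) (c i - t') (by linarith)
    nlinarith [hw.1 i]
  have hsum := Finset.sum_le_sum fun i (_ : i ∈ univ) => termwise i
  rwa [Finset.sum_add_distrib, ← Finset.sum_mul, hw.2, one_mul] at hsum

lemma expectedUtility_strictAnti (hε : 0 < ε) (hlow : ∀ x y, y ≤ x → ε * (x - y) ≤ u x - u y)
    (hw : w ∈ stdSimplex ℝ ι) (c : ι → ℝ) : StrictAnti (expectedUtility u w c) :=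
  fun t t' h => by
    have := expectedUtility_add_mul_le hlow hw c h.le
    nlinarith

lemma expectedUtility_surjective (hε : 0 < ε) (hu : Continuous u)
    (hlow : ∀ x y, y ≤ x → ε * (x - y) ≤ u x - u y) (hw : w ∈ stdSimplex ℝ ι) (c : ι → ℝ) :
    Surjective (expectedUtility u w c) := by
  have hcont : Continuous (expectedUtility u w c) := by
    unfold expectedUtility
    fun_prop
  have linear_bound : Tendsto (fun t => expectedUtility u w c 0 + -ε * t) atTop atBot :=
    tendsto_atBot_add_const_left _ _ (tendsto_id.const_mul_atTop_of_neg (neg_neg_of_pos hε))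
  have linear_bound' : Tendsto (fun t => expectedUtility u w c 0 + -ε * t) atBot atTop :=
    tendsto_atTop_add_const_left _ _ (tendsto_id.const_mul_atBot_of_neg (neg_neg_of_pos hε))
  refine hcont.surjective' (tendsto_atTop_mono' _ ?_ linear_bound')
    (tendsto_atBot_mono' _ ?_ linear_bound)
  · filter_upwards [eventually_le_atBot 0] with t ht
    linarith [expectedUtility_add_mul_le hlow hw c ht]
  · filter_upwards [eventually_ge_atTop 0] with t ht
    linarith [expectedUtility_add_mul_le hlow hw c ht]

/-- The utility-based shortfall of the payoffs `c` under the distribution `w`. -/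
noncomputable def utilityShortfall (u : ℝ → ℝ) (x₀ : ℝ) (w c : ι → ℝ) : ℝ :=
  invFun (expectedUtility u w c) x₀

lemma utilityShortfall_eq_iff (hε : 0 < ε) (hu : Continuous u)
    (hlow : ∀ x y, y ≤ x → ε * (x - y) ≤ u x - u y) (hw : w ∈ stdSimplex ℝ ι) {c : ι → ℝ}
    {t : ℝ} : utilityShortfall u x₀ w c = t ↔ expectedUtility u w c t = x₀ := by
  have spec : expectedUtility u w c (utilityShortfall u x₀ w c) = x₀ :=
    invFun_eq (expectedUtility_surjective hε hu hlow hw c x₀)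
  refine ⟨fun h => h ▸ spec, fun h => ?_⟩
  exact (expectedUtility_strictAnti hε hlow hw c).injective (spec.trans h.symm)

lemma utilityShortfall_le_add (hε : 0 < ε) (hu : Continuous u)
    (hlow : ∀ x y, y ≤ x → ε * (x - y) ≤ u x - u y) (hw : w ∈ stdSimplex ℝ ι) {c c' : ι → ℝ}
    {δ : ℝ} (hc : ∀ i, c' i ≤ c i + δ) :
    utilityShortfall u x₀ w c' ≤ utilityShortfall u x₀ w c + δ := by
  set t := utilityShortfall u x₀ w c
  have ht : expectedUtility u w c t = x₀ := (utilityShortfall_eq_iff hε hu hlow hw).1 rfl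
  have ht' : expectedUtility u w c' (utilityShortfall u x₀ w c') = x₀ :=
    (utilityShortfall_eq_iff hε hu hlow hw).1 rfl
  have hmono : Monotone u := fun x y h => by nlinarith [hlow y x h]
  refine (expectedUtility_strictAnti hε hlow hw c').le_iff_ge.1 ?_
  rw [ht', ← ht]
  refine Finset.sum_le_sum fun i _ => mul_le_mul_of_nonneg_left (hmono ?_) (hw.1 i)
  linarith [hc i]

lemma abs_utilityShortfall_sub_le (hε : 0 < ε) (hu : Continuous u)
    (hlow : ∀ x y, y ≤ x → ε * (x - y) ≤ u x - u y) (hw : w ∈ stdSimplex ℝ ι) {c c' : ι → ℝ}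
    {δ : ℝ} (hc : ∀ i, |c i - c' i| ≤ δ) :
    |utilityShortfall u x₀ w c - utilityShortfall u x₀ w c'| ≤ δ := by
  rw [abs_sub_le_iff, sub_le_iff_le_add', sub_le_iff_le_add']
  exact ⟨utilityShortfall_le_add hε hu hlow hw fun i => by linarith [(abs_sub_le_iff.1 (hc i)).1],
    utilityShortfall_le_add hε hu hlow hw fun i => by linarith [(abs_sub_le_iff.1 (hc i)).2]⟩

end UtilityShortfall

section RiskBellman

variable {S Act E : Type*}

def transitionWeight (P : S → Act → S → ℝ) (Pr : S → Act → E → ℝ) (s : S) (a : Act) :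
    S × E → ℝ :=
  fun i => P s a i.1 * Pr s a i.2

def bellmanTarget (A : S → Finset Act) (hA : ∀ s, (A s).Nonempty) (r : S → Act → E → ℝ)
    (γ : ℝ) (Q : S → Act → ℝ) (s : S) (a : Act) : S × E → ℝ :=
  fun i => r s a i.2 + γ * (A i.1).sup' (hA i.1) (Q i.1)

lemma abs_bellmanTarget_sub_le [Fintype S] [Fintype Act] (A : S → Finset Act)
    (hA : ∀ s, (A s).Nonempty) (r : S → Act → E → ℝ) {γ : ℝ} (hγ : 0 ≤ γ)
    (Q Q' : S → Act → ℝ) (s : S) (a : Act) (i : S × E) :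
    |bellmanTarget A hA r γ Q s a i - bellmanTarget A hA r γ Q' s a i| ≤ γ * dist Q Q' := by
  simp only [bellmanTarget, add_sub_add_left_eq_sub, ← mul_sub, abs_mul, abs_of_nonneg hγ]
  refine mul_le_mul_of_nonneg_left (Finset.abs_sup'_sub_sup'_le _ fun a' _ => ?_) hγ
  calc |Q i.1 a' - Q' i.1 a'| = dist (Q i.1 a') (Q' i.1 a') := (Real.dist_eq _ _).symm
    _ ≤ dist (Q i.1) (Q' i.1) := dist_le_pi_dist _ _ _
    _ ≤ dist Q Q' := dist_le_pi_dist _ _ _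

variable [Fintype S] [Fintype E]

lemma transitionWeight_mem_stdSimplex {P : S → Act → S → ℝ} {Pr : S → Act → E → ℝ} {s : S}
    {a : Act} (hP0 : ∀ s', 0 ≤ P s a s') (hP1 : ∑ s', P s a s' = 1) (hPr0 : ∀ e, 0 ≤ Pr s a e)
    (hPr1 : ∑ e, Pr s a e = 1) : transitionWeight P Pr s a ∈ stdSimplex ℝ (S × E) := by
  refine ⟨fun i => mul_nonneg (hP0 i.1) (hPr0 i.2), ?_⟩
  simp only [transitionWeight, Fintype.sum_prod_type, ← Finset.mul_sum, hPr1, mul_one, hP1]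

open Classical in
/-- Inadmissible pairs are sent to `0`, so that the operator acts on all of `S → Act → ℝ`. -/
noncomputable def riskBellman (A : S → Finset Act) (hA : ∀ s, (A s).Nonempty)
    (P : S → Act → S → ℝ) (Pr : S → Act → E → ℝ) (r : S → Act → E → ℝ) (γ : ℝ) (u : ℝ → ℝ)
    (x₀ : ℝ) (Q : S → Act → ℝ) : S → Act → ℝ :=
  fun s a => if a ∈ A s then
    utilityShortfall u x₀ (transitionWeight P Pr s a) (bellmanTarget A hA r γ Q s a) else 0

variable {A : S → Finset Act} {hA : ∀ s, (A s).Nonempty} {P : S → Act → S → ℝ}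
  {Pr : S → Act → E → ℝ} {r : S → Act → E → ℝ} {γ : ℝ} {u : ℝ → ℝ} {ε x₀ : ℝ}

lemma riskBellman_congr {Q Q' : S → Act → ℝ} (h : ∀ s, ∀ a ∈ A s, Q s a = Q' s a) :
    riskBellman A hA P Pr r γ u x₀ Q = riskBellman A hA P Pr r γ u x₀ Q' := by
  have htarget : bellmanTarget A hA r γ Q = bellmanTarget A hA r γ Q' := by
    funext s a i
    simp only [bellmanTarget, Finset.sup'_congr (hA i.1) rfl (h i.1)]
  unfold riskBellman
  rw [htarget]

lemma riskBellman_apply_eq_iff (hε : 0 < ε) (hu : Continuous u)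
    (hlow : ∀ x y, y ≤ x → ε * (x - y) ≤ u x - u y)
    (hw : ∀ s, ∀ a ∈ A s, transitionWeight P Pr s a ∈ stdSimplex ℝ (S × E))
    {Q : S → Act → ℝ} {s : S} {a : Act} (ha : a ∈ A s) :
    riskBellman A hA P Pr r γ u x₀ Q s a = Q s a ↔
      ∑ s', ∑ e, P s a s' * Pr s a e *
        u (r s a e + γ * (A s').sup' (hA s') (Q s') - Q s a) = x₀ := by
  rw [riskBellman, if_pos ha, utilityShortfall_eq_iff hε hu hlow (hw s a ha), expectedUtility,
    Fintype.sum_prod_type]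
  rfl

lemma contractingWith_riskBellman [Fintype Act] (hγ0 : 0 ≤ γ) (hγ1 : γ < 1) (hε : 0 < ε)
    (hu : Continuous u) (hlow : ∀ x y, y ≤ x → ε * (x - y) ≤ u x - u y)
    (hw : ∀ s, ∀ a ∈ A s, transitionWeight P Pr s a ∈ stdSimplex ℝ (S × E)) :
    ContractingWith γ.toNNReal (riskBellman A hA P Pr r γ u x₀) := by
  refine ⟨Real.toNNReal_lt_one.2 hγ1, LipschitzWith.of_dist_le' fun Q Q' => ?_⟩
  have hδ : 0 ≤ γ * dist Q Q' := mul_nonneg hγ0 dist_nonneg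
  refine (dist_pi_le_iff hδ).2 fun s => (dist_pi_le_iff hδ).2 fun a => ?_
  by_cases ha : a ∈ A s
  · simp only [riskBellman, if_pos ha, Real.dist_eq]
    exact abs_utilityShortfall_sub_le hε hu hlow (hw s a ha)
      (abs_bellmanTarget_sub_le A hA r hγ0 Q Q' s a)
  · simpa [riskBellman, ha] using hδ

end RiskBellman

theorem stmt_11_general {S Act E : Type*} [Fintype S] [Fintype Act] [Fintype E]
    (A : S → Finset Act) (hA : ∀ s, (A s).Nonempty)
    (P : S → Act → S → ℝ) (Pr : S → Act → E → ℝ) (r : S → Act → E → ℝ)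
    (hP0 : ∀ s a s', 0 ≤ P s a s') (hP1 : ∀ s, ∀ a ∈ A s, ∑ s', P s a s' = 1)
    (hPr0 : ∀ s a e, 0 ≤ Pr s a e) (hPr1 : ∀ s, ∀ a ∈ A s, ∑ e, Pr s a e = 1)
    (γ : ℝ) (hγ0 : 0 ≤ γ) (hγ1 : γ < 1)
    (u : ℝ → ℝ) (ε L : ℝ) (hε : 0 < ε)
    (hslope : ∀ x y : ℝ, x ≠ y → ε ≤ (u x - u y) / (x - y) ∧ (u x - u y) / (x - y) ≤ L)
    (x₀ : ℝ) :
    (∃ Q : S → Act → ℝ, ∀ s, ∀ a ∈ A s,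
      ∑ s', ∑ e, P s a s' * Pr s a e *
        u (r s a e + γ * (A s').sup' (hA s') (Q s') - Q s a) = x₀) ∧
    (∀ Q Q' : S → Act → ℝ,
      (∀ s, ∀ a ∈ A s, ∑ s', ∑ e, P s a s' * Pr s a e *
        u (r s a e + γ * (A s').sup' (hA s') (Q s') - Q s a) = x₀) →
      (∀ s, ∀ a ∈ A s, ∑ s', ∑ e, P s a s' * Pr s a e *
        u (r s a e + γ * (A s').sup' (hA s') (Q' s') - Q' s a) = x₀) →
      ∀ s, ∀ a ∈ A s, Q s a = Q' s a) := by
  have hlow x y (h : y ≤ x) := (sub_bounds_of_slope_bounds hslope h).1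
  have hu := (lipschitzWith_of_slope_bounds hε.le hslope).continuous
  have hw s a (ha : a ∈ A s) := transitionWeight_mem_stdSimplex (hP0 s a) (hP1 s a ha)
    (hPr0 s a) (hPr1 s a ha)
  set T := riskBellman A hA P Pr r γ u x₀
  have hT : ContractingWith γ.toNNReal T := contractingWith_riskBellman hγ0 hγ1 hε hu hlow hw
  have solves_iff {Q s a} (ha : a ∈ A s) := riskBellman_apply_eq_iff (hA := hA) (r := r)
    (γ := γ) (x₀ := x₀) (Q := Q) hε hu hlow hw ha
  have fixed_of_solves {Q} (hQ : ∀ s, ∀ a ∈ A s, T Q s a = Q s a) : IsFixedPt T (T Q) :=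
    riskBellman_congr hQ
  refine ⟨⟨hT.fixedPoint T, fun s a ha => (solves_iff ha).1 ?_⟩, fun Q Q' hQ hQ' s a ha => ?_⟩
  · exact congrFun (congrFun (hT.fixedPoint_isFixedPt) s) a
  · have hQT s a (ha : a ∈ A s) : T Q s a = Q s a := (solves_iff ha).2 (hQ s a ha)
    have hQT' s a (ha : a ∈ A s) : T Q' s a = Q' s a := (solves_iff ha).2 (hQ' s a ha)
    rw [← hQT s a ha, ← hQT' s a ha,
      hT.fixedPoint_unique' (fixed_of_solves hQT) (fixed_of_solves hQT')]

/-- For a utility `u` with slopes in `[ε, L]` (`0 < ε ≤ L`) and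
`γ ∈ [0,1)`, the risk-sensitive optimality equation
`∑_{s',e} P(s'|s,a) P_r(e|s,a) u(r(s,a,e) + γ max_{a' ∈ A s'} Q(s',a') − Q(s,a)) = x₀`
for all admissible `(s,a)` has a solution, and the solution is unique on the set of
admissible state-action pairs. -/
theorem stmt_11 {S Act E : Type*} [Fintype S] [Nonempty S] [Fintype Act] [Fintype E]
    (A : S → Finset Act) (hA : ∀ s, (A s).Nonempty)
    (P : S → Act → S → ℝ) (Pr : S → Act → E → ℝ) (r : S → Act → E → ℝ)
    (hP0 : ∀ s a s', 0 ≤ P s a s') (hP1 : ∀ s, ∀ a ∈ A s, ∑ s', P s a s' = 1)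
    (hPr0 : ∀ s a e, 0 ≤ Pr s a e) (hPr1 : ∀ s, ∀ a ∈ A s, ∑ e, Pr s a e = 1)
    (γ : ℝ) (hγ0 : 0 ≤ γ) (hγ1 : γ < 1)
    (u : ℝ → ℝ) (ε L : ℝ) (hε : 0 < ε) (hεL : ε ≤ L)
    (hslope : ∀ x y : ℝ, x ≠ y → ε ≤ (u x - u y) / (x - y) ∧ (u x - u y) / (x - y) ≤ L)
    (x₀ : ℝ) :
    (∃ Q : S → Act → ℝ, ∀ s, ∀ a ∈ A s,
      ∑ s', ∑ e, P s a s' * Pr s a e *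
        u (r s a e + γ * (A s').sup' (hA s') (Q s') - Q s a) = x₀) ∧
    (∀ Q Q' : S → Act → ℝ,
      (∀ s, ∀ a ∈ A s, ∑ s', ∑ e, P s a s' * Pr s a e *
        u (r s a e + γ * (A s').sup' (hA s') (Q s') - Q s a) = x₀) →
      (∀ s, ∀ a ∈ A s, ∑ s', ∑ e, P s a s' * Pr s a e *
        u (r s a e + γ * (A s').sup' (hA s') (Q' s') - Q' s a) = x₀) →
      ∀ s, ∀ a ∈ A s, Q s a = Q' s a) :=
  stmt_11_general A hA P Pr r hP0 hP1 hPr0 hPr1 γ hγ0 hγ1 u ε L hε hslope x₀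
end
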